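/- Consider the Witt algebra W = ⊕_{n≥0} K x_n with bracket [x_n,x_m]₀ = (n−m)x_{n+m}, the map α₀(x_n) = 2x_n, the bilinear skew-symmetric map [x_n,x_m]₁ = ((n−m)(n+m−1)/2) x_{n+m} and α₁(x_n) = n x_n. Then the cyclic sum over (p,q,r) of [α₀(x_p),[x_q,x_r]₀]₁ + [α₁(x_p),[x_q,x_r]₀]₀ + [α₀(x_p),[x_q,x_r]₁]₀ vanishes for all p, q, r ≥ 0. -/
import Mathlib


/-- Generator `x_n` of the Witt algebra `W_{≥0} = ⊕_{n≥0} K x_n`. -/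
noncomputable def wittGen (K : Type*) [Field K] (n : ℕ) : ℕ →₀ K :=
  Finsupp.single n (1 : K)

/-- The Witt bracket `[x_n, x_m]₀ = (n - m) x_{n+m}`, extended bilinearly. -/
noncomputable def wittBr0 {K : Type*} [Field K] (u v : ℕ →₀ K) : ℕ →₀ K :=
  u.sum fun n a => v.sum fun m b =>
    (a * b * ((n : K) - (m : K))) • Finsupp.single (n + m) (1 : K)

/-- The first-order bracket `[x_n, x_m]₁ = ((n-m)(n+m-1)/2) x_{n+m}`, extended
bilinearly. -/
noncomputable def wittBr1 {K : Type*} [Field K] (u v : ℕ →₀ K) : ℕ →₀ K :=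
  u.sum fun n a => v.sum fun m b =>
    (a * b * (((n : K) - (m : K)) * ((n : K) + (m : K) - 1) / 2)) •
      Finsupp.single (n + m) (1 : K)

/-- The map `α₀(x_n) = 2 x_n`, extended linearly. -/
noncomputable def wittA0 {K : Type*} [Field K] (u : ℕ →₀ K) : ℕ →₀ K :=
  u.sum fun n a => (2 * a) • Finsupp.single n (1 : K)

/-- The map `α₁(x_n) = n x_n`, extended linearly. -/
noncomputable def wittA1 {K : Type*} [Field K] (u : ℕ →₀ K) : ℕ →₀ K :=
  u.sum fun n a => ((n : K) * a) • Finsupp.single n (1 : K)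


section Aux
variable {K : Type*} [Field K]

lemma wittBr0_smul_single (c d : K) (n m : ℕ) :
    wittBr0 (c • Finsupp.single n (1 : K)) (d • Finsupp.single m (1 : K))
      = (c * d * ((n : K) - (m : K))) • Finsupp.single (n + m) (1 : K) := by
  simp only [wittBr0, Finsupp.smul_single, smul_eq_mul, mul_one]
  rw [Finsupp.sum_single_index, Finsupp.sum_single_index]
  · simp
  · simp

lemma wittBr1_smul_single (c d : K) (n m : ℕ) :
    wittBr1 (c • Finsupp.single n (1 : K)) (d • Finsupp.single m (1 : K))
      = (c * d * (((n : K) - (m : K)) * ((n : K) + (m : K) - 1) / 2)) •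
        Finsupp.single (n + m) (1 : K) := by
  simp only [wittBr1, Finsupp.smul_single, smul_eq_mul, mul_one]
  rw [Finsupp.sum_single_index, Finsupp.sum_single_index]
  · simp
  · simp

lemma wittA0_gen (n : ℕ) :
    wittA0 (wittGen K n) = (2 : K) • Finsupp.single n (1 : K) := by
  simp only [wittA0, wittGen]
  rw [Finsupp.sum_single_index] <;> simp

lemma wittA1_gen (n : ℕ) :
    wittA1 (wittGen K n) = (n : K) • Finsupp.single n (1 : K) := by
  simp only [wittA1, wittGen]
  rw [Finsupp.sum_single_index] <;> simp

lemma wittGen_eq (n : ℕ) : wittGen K n = (1 : K) • Finsupp.single n (1 : K) := by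
  simp [wittGen]

end Aux

/-- The cyclic sum `↺_{p,q,r} ([α₀(x_p),[x_q,x_r]₀]₁ + [α₁(x_p),[x_q,x_r]₀]₀
+ [α₀(x_p),[x_q,x_r]₁]₀)` vanishes on the Witt algebra `W_{≥0}`. -/
theorem witt_first_order_cyclic_sum_eq_zero
    {K : Type*} [Field K] [CharZero K] :
    ∀ p q r : ℕ,
      (wittBr1 (wittA0 (wittGen K p)) (wittBr0 (wittGen K q) (wittGen K r))
        + wittBr0 (wittA1 (wittGen K p)) (wittBr0 (wittGen K q) (wittGen K r))
        + wittBr0 (wittA0 (wittGen K p)) (wittBr1 (wittGen K q) (wittGen K r)))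
      + (wittBr1 (wittA0 (wittGen K q)) (wittBr0 (wittGen K r) (wittGen K p))
        + wittBr0 (wittA1 (wittGen K q)) (wittBr0 (wittGen K r) (wittGen K p))
        + wittBr0 (wittA0 (wittGen K q)) (wittBr1 (wittGen K r) (wittGen K p)))
      + (wittBr1 (wittA0 (wittGen K r)) (wittBr0 (wittGen K p) (wittGen K q))
        + wittBr0 (wittA1 (wittGen K r)) (wittBr0 (wittGen K p) (wittGen K q))
        + wittBr0 (wittA0 (wittGen K r)) (wittBr1 (wittGen K p) (wittGen K q))) = 0 := by
  intro p q r
  simp only [wittA0_gen, wittA1_gen]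
  simp only [wittGen_eq]
  simp only [wittBr0_smul_single, wittBr1_smul_single]
  rw [show p + (q + r) = p + q + r from by ring,
    show q + (r + p) = p + q + r from by ring,
    show r + (p + q) = p + q + r from by ring]
  rw [← add_smul, ← add_smul, ← add_smul, ← add_smul, ← add_smul, ← add_smul,
    ← add_smul, ← add_smul]
  convert zero_smul K (Finsupp.single (p+q+r) (1:K))
  push_cast
  field_simp
  ring
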